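/- For L = (L_1,...,L_m) with positive integer entries, the numbers P(J_1=j_1,...,J_m=j_m) = (∏_{i=1}^m C(L_i+j_{i+1}, j_i)) / (∏_{i=1}^m (i+1)^{L_i}) (with j_{m+1}=0 and the convention C(a,b)=0 unless 0 ≤ b ≤ a) define a probability distribution on the nonnegative integer vectors (j_1,...,j_m) ∈ N_0^m, i.e. they are nonnegative and sum to 1, and this distribution assigns probability one to the set of L-compatible vectors. -/

import Mathlib

open MeasureTheory ProbabilityTheory Filter Finset

noncomputable section

/-- The Gaussian (`q`-)binomial coefficient `[n choose k]_q`, as a polynomial in `q`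
with natural number coefficients. -/
def qBinom : ℕ → ℕ → Polynomial ℕ
  | _, 0 => 1
  | 0, _ + 1 => 0
  | n + 1, k + 1 => qBinom n k + Polynomial.X ^ (k + 1) * qBinom n (k + 1)

/-- Evaluation of a polynomial with natural number coefficients at a real argument. -/
def evalR (p : Polynomial ℕ) (x : ℝ) : ℝ := (p.map (Nat.castRingHom ℝ)).eval x

/-- `nx m j i = j (i+1)`, with the convention `j (m+1) = 0`. -/
def nx (m : ℕ) (j : ℕ → ℕ) (i : ℕ) : ℕ := if i + 1 ≤ m then j (i + 1) else 0

/-- `j` is `L`-compatible (paper-indexed by `1,…,m`). -/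
def Compatible (m : ℕ) (L j : ℕ → ℕ) : Prop :=
  ∀ i ∈ Finset.Icc 1 m, j i ≤ L i + nx m j i

/-- The numerator polynomial `∏_{i=1}^m [L_i + j_{i+1} choose j_i]_q` of `F(L,j)(q)`. -/
def FPol (m : ℕ) (L j : ℕ → ℕ) : Polynomial ℕ :=
  ∏ i ∈ Finset.Icc 1 m, qBinom (L i + nx m j i) (j i)

/-- The normalizing constant `∏_{i=1}^m C(L_i + j_{i+1}, j_i)`. -/
def FNorm (m : ℕ) (L j : ℕ → ℕ) : ℕ :=
  ∏ i ∈ Finset.Icc 1 m, (L i + nx m j i).choose (j i)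

/-- `Q(L,j) = Σ_{i=1}^m j_i (j_i + Σ_{ℓ=1}^{i-1} L_ℓ)`. -/
def Qstat (m : ℕ) (L j : ℕ → ℕ) : ℕ :=
  ∑ i ∈ Finset.Icc 1 m, j i * (j i + ∑ l ∈ Finset.Icc 1 (i - 1), L l)

/-- Paper-indexed (indices `1,…,m`) extension of a `Fin m`-vector of naturals, by zero. -/
def extN (m : ℕ) (j : Fin m → ℕ) : ℕ → ℕ := fun i =>
  if h : 1 ≤ i ∧ i ≤ m then j ⟨i - 1, by omega⟩ else 0

/-- Paper-indexed (indices `1,…,m`) extension of a `Fin m`-vector of reals, by zero. -/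
def extR (m : ℕ) (a : Fin m → ℝ) : ℕ → ℝ := fun i =>
  if h : 1 ≤ i ∧ i ≤ m then a ⟨i - 1, by omega⟩ else 0

/-- The modified `q`-supernomial `T̃(L,a)(q)`. -/
def Tsuper (m : ℕ) (L : ℕ → ℕ) (a : ℕ) : Polynomial ℕ :=
  ∑ j ∈ Finset.Nat.antidiagonalTuple m a,
    Polynomial.X ^ Qstat m L (extN m j) * FPol m L (extN m j)

/-- `T̃(L)(q) = Σ_{a=0}^{L_1+⋯+L_m} T̃(L,a)(q)`. -/
def TsuperTot (m : ℕ) (L : ℕ → ℕ) : Polynomial ℕ :=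
  ∑ a ∈ Finset.range (∑ i ∈ Finset.Icc 1 m, L i + 1), Tsuper m L a

/-- `e(L,j) = E(Inv(L,j)) = (1/2) Σ_{i=1}^m (L_i + j_{i+1} - j_i) j_i`. -/
def eStat (m : ℕ) (L j : ℕ → ℕ) : ℝ :=
  (1 / 2) * ∑ i ∈ Finset.Icc 1 m, (((L i : ℝ) + (nx m j i : ℕ)) - (j i : ℕ)) * (j i : ℕ)

/-- `v(a,b) = (1/12) Σ_{i=1}^m (a_i + b_{i+1} - b_i) b_i (a_i + b_{i+1})`. -/
def vab (m : ℕ) (a b : ℕ → ℝ) : ℝ :=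
  (1 / 12) * ∑ i ∈ Finset.Icc 1 m, (a i + b (i + 1) - b i) * b i * (a i + b (i + 1))

/-- The weight of the unrestricted mixing distribution. -/
def mixW (m : ℕ) (L j : ℕ → ℕ) : ℝ :=
  (FNorm m L j : ℝ) / ∏ i ∈ Finset.Icc 1 m, ((i : ℝ) + 1) ^ L i

/-- Convergence in distribution (weak convergence of the laws). -/
def TendstoInDist {Ω : Type*} [MeasureSpace Ω] {E : Type*} [MeasurableSpace E]
    [TopologicalSpace E] (X : ℕ → Ω → E) (μ : Measure E) : Prop :=
  ∀ f : BoundedContinuousFunction E ℝ,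
    Filter.Tendsto (fun N => ∫ ω, f (X N ω)) Filter.atTop (nhds (∫ y, f y ∂μ))

/-- The standard Gaussian measure on `ι → ℝ`. -/
def stdGaussianPi (ι : Type*) [Fintype ι] : Measure (ι → ℝ) :=
  Measure.pi fun _ => gaussianReal 0 1

/-- The centered multivariate normal distribution `N(0,S)` on `ι → ℝ`, for a positive
semidefinite covariance matrix `S`. -/
def mvNormal {ι : Type*} [Fintype ι] [DecidableEq ι] (S : Matrix ι ι ℝ)
    (hS : S.PosSemidef) : Measure (ι → ℝ) :=
  (stdGaussianPi ι).map fun x =>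
    (hS.1.eigenvectorUnitary.1 * Matrix.diagonal ((RCLike.ofReal : ℝ → ℝ) ∘ (√·) ∘ hS.1.eigenvalues) *
      (star hS.1.eigenvectorUnitary : Matrix ι ι ℝ)).mulVec x

/-- The covariance of two real random variables (with respect to `volume`);
the variance of `X` is `covar X X`. -/
def covar {Ω : Type*} [MeasureSpace Ω] (X Y : Ω → ℝ) : ℝ :=
  ∫ ω, (X ω - ∫ ω', X ω') * (Y ω - ∫ ω', Y ω')

/-- The quadratic function `q(x,v) = xᵀMx + v·xᵀ`. -/
def qform {m : ℕ} (M : Matrix (Fin m) (Fin m) ℝ) (v x : Fin m → ℝ) : ℝ :=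
  dotProduct x (M.mulVec x) + dotProduct v x

/-- The quadratic form `c S cᵀ` of a `Fin m`-indexed matrix at a paper-indexed vector `c`. -/
def quadForm {m : ℕ} (S : Matrix (Fin m) (Fin m) ℝ) (c : ℕ → ℝ) : ℝ :=
  ∑ i : Fin m, ∑ j : Fin m, c ((i : ℕ) + 1) * S i j * c ((j : ℕ) + 1)

/-- `c_i = a_i + b_{i+1} + b_{i-1} - 2 b_i` (paper-indexed). -/
def cP (a b : ℕ → ℝ) (i : ℕ) : ℝ := a i + b (i + 1) + b (i - 1) - 2 * b i

/-- `f_i = a_i + b_{i+1} + b_{i-1} + 2 b_i + 2 Σ_{ℓ=1}^{i-1} a_ℓ` (paper-indexed). -/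
def fP (a b : ℕ → ℝ) (i : ℕ) : ℝ :=
  a i + b (i + 1) + b (i - 1) + 2 * b i + 2 * ∑ l ∈ Finset.Icc 1 (i - 1), a l

/-- `b_i = i Σ_{ℓ=i}^m a_ℓ/(ℓ+1)` (paper-indexed). -/
def bPaper (m : ℕ) (a : Fin m → ℝ) (i : ℕ) : ℝ :=
  (i : ℝ) * ∑ l ∈ Finset.Icc i m, extR m a l / ((l : ℝ) + 1)

/-- The asymptotic covariance matrix of the mixing distribution in the unrestricted case:
`Σ_{i,j} = min(i,j) Σ_{k=max(i,j)}^m a_k/(k+1) - ij Σ_{k=max(i,j)}^m a_k/(k+1)²`. -/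
def SigUnr (m : ℕ) (a : Fin m → ℝ) : Matrix (Fin m) (Fin m) ℝ := fun i j =>
  ((min ((i : ℕ) + 1) ((j : ℕ) + 1) : ℕ) : ℝ) *
      (∑ k ∈ Finset.Icc (max ((i : ℕ) + 1) ((j : ℕ) + 1)) m, extR m a k / ((k : ℝ) + 1)) -
    (((i : ℕ) + 1 : ℝ) * ((j : ℕ) + 1 : ℝ)) *
      ∑ k ∈ Finset.Icc (max ((i : ℕ) + 1) ((j : ℕ) + 1)) m, extR m a k / ((k : ℝ) + 1) ^ 2

/-- `σ²(a) = (1/12) Σ_{k=1}^m k(k+2) a_k`. -/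
def sigSq (m : ℕ) (a : Fin m → ℝ) : ℝ :=
  (1 / 12) * ∑ k ∈ Finset.Icc 1 m, (k : ℝ) * ((k : ℝ) + 2) * extR m a k

/-- `c(i) = Σ_{k=i}^m ((k+1-i)/(k+1)) a_k` (paper-indexed). -/
def cRes (m : ℕ) (a : Fin m → ℝ) (i : ℕ) : ℝ :=
  ∑ k ∈ Finset.Icc i m, (((k : ℝ) + 1 - (i : ℝ)) / ((k : ℝ) + 1)) * extR m a k

/-- The asymptotic covariance matrix of the mixing distribution in the central
restricted case. -/
def SigRes (m : ℕ) (a : Fin m → ℝ) : Matrix (Fin m) (Fin m) ℝ := fun i j =>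
  SigUnr m a i j -
    ((((i : ℕ) + 1 : ℝ) * ((j : ℕ) + 1 : ℝ)) / (2 * sigSq m a)) *
      cRes m a ((i : ℕ) + 1) * cRes m a ((j : ℕ) + 1)

/-- `X` has probability generating function `p(q)/p(1)`. -/
def pgfLaw {Ω : Type*} [MeasureSpace Ω] (X : Ω → ℕ) (p : Polynomial ℕ) : Prop :=
  ∀ k : ℕ, volume {ω | X ω = k} = ENNReal.ofReal ((p.coeff k : ℝ) / ((p.eval 1 : ℕ) : ℝ))

/-- `J` has the mixing distribution `P(J=j) = ∏ C(L_i+j_{i+1}, j_i) / ∏ (i+1)^{L_i}`. -/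
def mixLaw {Ω : Type*} [MeasureSpace Ω] (m : ℕ) (L : ℕ → ℕ) (J : Ω → Fin m → ℕ) : Prop :=
  ∀ j : Fin m → ℕ, volume {ω | J ω = j} = ENNReal.ofReal (mixW m L (extN m j))

/-- Conditionally on `J = j`, the random variable `Y` is distributed as `Inv(L,j)`. -/
def condInvLaw {Ω : Type*} [MeasureSpace Ω] (m : ℕ) (L : ℕ → ℕ)
    (J : Ω → Fin m → ℕ) (Y : Ω → ℕ) : Prop :=
  ∀ (j : Fin m → ℕ) (k : ℕ),
    volume {ω | J ω = j ∧ Y ω = k} =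
      volume {ω | J ω = j} *
        ENNReal.ofReal (((FPol m L (extN m j)).coeff k : ℝ) / (FNorm m L (extN m j) : ℝ))

/-- `J` is supported on `L`-compatible vectors. -/
def compatSupport {Ω : Type*} [MeasureSpace Ω] (m : ℕ) (L : ℕ → ℕ)
    (J : Ω → Fin m → ℕ) : Prop :=
  volume {ω | Compatible m L (extN m (J ω))} = 1

/-- The probability of the occupancy pattern `β` for the independent uniform
multinomial occupancy statistics of words of lengths `L_1, …, L_m`. -/
def multW (m : ℕ) (L : ℕ → ℕ) (β : ℕ → ℕ → ℕ) : ℝ :=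
  ∏ k ∈ Finset.Icc 1 m,
    if ∑ i ∈ Finset.range (k + 1), β k i = L k then
      (Nat.multinomial (Finset.range (k + 1)) (β k) : ℝ) / ((k : ℝ) + 1) ^ L k
    else 0

/-- The event that the occupancy field `B` matches the pattern `β` on all relevant
coordinates. -/
def occEvent (m : ℕ) {Ω : Type*} (B : Ω → ℕ → ℕ → ℕ) (β : ℕ → ℕ → ℕ) : Set Ω :=
  {ω | ∀ k ∈ Finset.Icc 1 m, ∀ i ∈ Finset.range (k + 1), B ω k i = β k i}

/-- `B` is an independent family of uniform multinomial occupancy statistics. -/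
def multLaw {Ω : Type*} [MeasureSpace Ω] (m : ℕ) (L : ℕ → ℕ) (B : Ω → ℕ → ℕ → ℕ) : Prop :=
  ∀ β : ℕ → ℕ → ℕ, volume (occEvent m B β) = ENNReal.ofReal (multW m L β)

/-- The weighted sum `Σ_{k=1}^m Σ_{i=0}^k i·B_i(k)` of an occupancy pattern. -/
def wSum (m : ℕ) (B : ℕ → ℕ → ℕ) : ℕ :=
  ∑ k ∈ Finset.Icc 1 m, ∑ i ∈ Finset.range (k + 1), i * B k i

/-- The asymptotic covariance matrix `Σ_{i,j}(k,ℓ)` of the conditioned occupancy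
statistic. -/
def SigCond (m : ℕ) (a : Fin m → ℝ) :
    Matrix ((k : Fin m) × Fin ((k : ℕ) + 2)) ((k : Fin m) × Fin ((k : ℕ) + 2)) ℝ :=
  fun p q =>
    (if (p.1 : ℕ) = (q.1 : ℕ) then
        a p.1 * ((if (p.2 : ℕ) = (q.2 : ℕ) then 1 else 0) / ((p.1 : ℕ) + 2 : ℝ) -
          1 / ((p.1 : ℕ) + 2 : ℝ) ^ 2)
      else 0) -
    a p.1 * a q.1 * ((((p.1 : ℕ) + 1 : ℝ)) - 2 * ((p.2 : ℕ) : ℝ)) *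
        ((((q.1 : ℕ) + 1 : ℝ)) - 2 * ((q.2 : ℕ) : ℝ)) /
      (4 * ((p.1 : ℕ) + 2 : ℝ) * ((q.1 : ℕ) + 2 : ℝ) * sigSq m a)

/-
Summing out the coordinates one at a time from the first, the binomial theorem gives
`Σ_{j₁} C(L₁ + j₂, j₁) = 2^{L₁} · 2^{j₂}`, the factor `2^{j₂}` turns the next sum into
`Σ_{j₂} C(L₂ + j₃, j₂) 2^{j₂} = 3^{L₂} · 3^{j₃}`, and so on, so that
`Σ_j ∏ C(L_i + j_{i+1}, j_i) = ∏ (i+1)^{L_i}`. The series are summed in `ℝ≥0∞`, where no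
summability has to be checked, and the real series is recovered with `toReal`.
-/

open scoped ENNReal

lemma tsum_choose_mul_pow (n : ℕ) (x : ℝ≥0∞) :
    ∑' j : ℕ, (n.choose j : ℝ≥0∞) * x ^ j = (x + 1) ^ n := by
  rw [tsum_eq_sum (s := range (n + 1)) fun j hj => by
    rw [Nat.choose_eq_zero_of_lt (by simpa using hj), Nat.cast_zero, zero_mul], add_pow]
  simp only [one_pow, mul_one, mul_comm]

lemma prod_Icc_one_eq_prod_fin {M : Type*} [CommMonoid M] (m : ℕ) (g : ℕ → M) :
    ∏ i ∈ Icc 1 m, g i = ∏ i : Fin m, g ((i : ℕ) + 1) := by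
  rw [Fin.prod_univ_eq_prod_range (fun i => g (i + 1)), ← Ico_add_one_right_eq_Icc,
    prod_Ico_eq_prod_range]
  simp [add_comm]

/-- `j (i+1)`, where `t` stands for the coordinate past the end: it is `0` in `FNorm`, and it
becomes the last coordinate when the induction peels that coordinate off. -/
def nextCoord {k : ℕ} (j : Fin k → ℕ) (t : ℕ) (i : Fin k) : ℕ :=
  if h : (i : ℕ) + 1 < k then j ⟨(i : ℕ) + 1, h⟩ else t

lemma nextCoord_snoc_last {k : ℕ} (j : Fin k → ℕ) (s t : ℕ) :
    nextCoord (Fin.snoc j s : Fin (k + 1) → ℕ) t (Fin.last k) = t := by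
  simp [nextCoord]

lemma nextCoord_snoc_castSucc {k : ℕ} (j : Fin k → ℕ) (s t : ℕ) (i : Fin k) :
    nextCoord (Fin.snoc j s : Fin (k + 1) → ℕ) t i.castSucc = nextCoord j s i := by
  by_cases h : (i : ℕ) + 1 < k
  · simpa [nextCoord, h] using Fin.snoc_castSucc (α := fun _ => ℕ) s j ⟨(i : ℕ) + 1, h⟩
  · have hlast : (⟨(i : ℕ) + 1, by omega⟩ : Fin (k + 1)) = Fin.last k := by
      ext; simp only [Fin.val_last]; omega
    simp [nextCoord, h, hlast]

lemma prod_choose_nextCoord_snoc {k : ℕ} (f : ℕ → ℕ) (j : Fin k → ℕ) (s t : ℕ) :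
    ∏ i : Fin (k + 1), (f i + nextCoord (Fin.snoc (α := fun _ => ℕ) j s) t i).choose
        (Fin.snoc (α := fun _ => ℕ) j s i) =
      (f k + t).choose s * ∏ i : Fin k, (f i + nextCoord j s i).choose (j i) := by
  rw [Fin.prod_univ_castSucc, mul_comm]
  simp [nextCoord_snoc_castSucc, nextCoord_snoc_last]

theorem tsum_prod_choose_nextCoord (f : ℕ → ℕ) (k t : ℕ) :
    ∑' j : Fin k → ℕ, ((∏ i : Fin k, (f i + nextCoord j t i).choose (j i) : ℕ) : ℝ≥0∞) =
      (∏ i : Fin k, ((i : ℝ≥0∞) + 2) ^ f i) * ((k : ℝ≥0∞) + 1) ^ t := by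
  induction k generalizing t with
  | zero => simp
  | succ k ih =>
    have snocEquiv_eq (p : ℕ × (Fin k → ℕ)) : Fin.snocEquiv (fun _ => ℕ) p = Fin.snoc p.2 p.1 :=
      funext (Fin.snocEquiv_apply (fun _ => ℕ) p)
    rw [← (Fin.snocEquiv fun _ => ℕ).tsum_eq, ENNReal.tsum_prod']
    simp only [snocEquiv_eq, prod_choose_nextCoord_snoc, Nat.cast_mul, ENNReal.tsum_mul_left, ih]
    calc ∑' s : ℕ, ((f k + t).choose s : ℝ≥0∞) *
          ((∏ i : Fin k, ((i : ℝ≥0∞) + 2) ^ f i) * ((k : ℝ≥0∞) + 1) ^ s)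
        = (∏ i : Fin k, ((i : ℝ≥0∞) + 2) ^ f i) *
            ∑' s : ℕ, ((f k + t).choose s : ℝ≥0∞) * ((k : ℝ≥0∞) + 1) ^ s := by
          rw [← ENNReal.tsum_mul_left]
          exact tsum_congr fun s => by ring
      _ = _ := by
          rw [tsum_choose_mul_pow, Fin.prod_univ_castSucc, pow_add]
          push_cast [Fin.val_castSucc]
          ring

lemma FNorm_extN (m : ℕ) (L : ℕ → ℕ) (j : Fin m → ℕ) :
    FNorm m L (extN m j) = ∏ i : Fin m, (L ((i : ℕ) + 1) + nextCoord j 0 i).choose (j i) := by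
  have extN_succ (i : Fin m) : extN m j ((i : ℕ) + 1) = j i := by simp [extN]
  rw [FNorm, prod_Icc_one_eq_prod_fin]
  refine prod_congr rfl fun i _ => ?_
  by_cases h : (i : ℕ) + 1 < m
  · have extN_succ_succ := extN_succ ⟨(i : ℕ) + 1, h⟩
    simp only at extN_succ_succ
    simp [nx, nextCoord, h, Nat.succ_le_of_lt h, extN_succ, extN_succ_succ]
  · simp [nx, nextCoord, h, extN_succ]

lemma tsum_FNorm_extN (m : ℕ) (L : ℕ → ℕ) :
    ∑' j : Fin m → ℕ, (FNorm m L (extN m j) : ℝ) = ∏ i ∈ Icc 1 m, ((i : ℝ) + 1) ^ L i := by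
  have hE : ∑' j : Fin m → ℕ, (FNorm m L (extN m j) : ℝ≥0∞) =
      ∏ i ∈ Icc 1 m, ((i : ℝ≥0∞) + 1) ^ L i := by
    simp_rw [FNorm_extN]
    rw [tsum_prod_choose_nextCoord (fun i => L (i + 1)), prod_Icc_one_eq_prod_fin]
    simp only [pow_zero, mul_one, Nat.cast_add, Nat.cast_one, add_assoc, one_add_one_eq_two]
  calc ∑' j : Fin m → ℕ, (FNorm m L (extN m j) : ℝ)
      = (∑' j : Fin m → ℕ, (FNorm m L (extN m j) : ℝ≥0∞)).toReal := by
        rw [ENNReal.tsum_toReal_eq fun _ => ENNReal.natCast_ne_top _]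
        simp
    _ = _ := by
        rw [hE, ENNReal.toReal_prod]
        simp [ENNReal.toReal_pow, ENNReal.toReal_add]

lemma mixW_nonneg (m : ℕ) (L j : ℕ → ℕ) : 0 ≤ mixW m L j := by
  unfold mixW
  positivity

lemma tsum_mixW_extN (m : ℕ) (L : ℕ → ℕ) : ∑' j : Fin m → ℕ, mixW m L (extN m j) = 1 := by
  have hpos : 0 < ∏ i ∈ Icc 1 m, ((i : ℝ) + 1) ^ L i := prod_pos fun i _ => by positivity
  simp only [mixW, tsum_div_const, tsum_FNorm_extN, div_self hpos.ne']

lemma mixW_eq_zero_of_not_compatible {m : ℕ} {L j : ℕ → ℕ} (h : ¬Compatible m L j) :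
    mixW m L j = 0 := by
  obtain ⟨i, hi, hlt⟩ := not_forall₂.mp h
  have hzero : FNorm m L j = 0 := prod_eq_zero hi (Nat.choose_eq_zero_of_lt (not_le.mp hlt))
  rw [mixW, hzero, Nat.cast_zero, zero_div]

theorem statement_2_general (m : ℕ) (L : ℕ → ℕ) :
    (∀ j : Fin m → ℕ, 0 ≤ mixW m L (extN m j)) ∧
    ((∑' j : Fin m → ℕ, mixW m L (extN m j)) = 1) ∧
    (∀ j : Fin m → ℕ, ¬Compatible m L (extN m j) → mixW m L (extN m j) = 0) :=
  ⟨fun _ => mixW_nonneg .., tsum_mixW_extN m L, fun _ => mixW_eq_zero_of_not_compatible⟩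

/-- The numbers `P(J=j) = ∏ C(L_i+j_{i+1}, j_i) / ∏ (i+1)^{L_i}` define an
`L`-compatible probability distribution on `ℕ₀^m`. -/
theorem statement_2 (m : ℕ) (hm : 1 ≤ m) (L : ℕ → ℕ)
    (hL : ∀ i ∈ Finset.Icc 1 m, 0 < L i) :
    (∀ j : Fin m → ℕ, 0 ≤ mixW m L (extN m j)) ∧
    ((∑' j : Fin m → ℕ, mixW m L (extN m j)) = 1) ∧
    (∀ j : Fin m → ℕ, ¬Compatible m L (extN m j) → mixW m L (extN m j) = 0) :=
  statement_2_general m L
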